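/- Let W_max >庶 0 and ε ∈ (0, 1). Set k_max = 2·λ·κ·π·d²·(W_p/W_max)^{2/α}, let β_un > 0 be the unique solution of α·β = k_max·β^{2/α}·(1+β)·ln(1+β), and assume 1 − exp(−α·β_un / (2·(1+β_un)·ln(1+β_un))) > ε. Set β* = (W_max/W_p)·(−ln(1−ε)/(λ·κ·π·d²))^{α/2}. Then for every pair (W_s, β) with 0 < W_s ≤ W_max, β > 0, and 1 − P_suc(W_s, β) ≤ ε, one has T(W_s, β) ≤ T(W_max, β*) = (1−ε)·log₂(1 + β*); i.e., (W_max, β*) maximizes the link throughput subject to the power and outage constraints. -/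

import Mathlib

/-!
Write `p = 2/α` and `k = λκπd² (W_p/W_max)^p`. Lowering the power below `W_max` only enlarges
the exponent of `P_suc`, so it lowers the throughput and tightens the outage constraint; at
`W_max` the constraint reads `k β^p ≤ -log(1-ε) = k β*^p`, i.e. `β ≤ β*`. The derivative of
`β ↦ log(1+β) e^{-kβ^p}` has the sign of `1 - p k β^p · (1+β) log(1+β)/β`, where the last factor
is a secant slope of the strictly convex `x ↦ x log x` and hence increasing. So the derivative
changes sign only at `β_un`, and the hypothesis on `β_un` says exactly that `β* < β_un`: the
throughput increases on `(0, β*]`.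
-/

open Real Set

theorem Gamma_one_add_mul_Gamma_one_sub_pos {x : ℝ} (hx₀ : -1 < x) (hx₁ : x < 1) :
    0 < Gamma (1 + x) * Gamma (1 - x) :=
  mul_pos (Gamma_pos_of_pos (by linarith)) (Gamma_pos_of_pos (by linarith))

theorem one_sub_exp_neg_le_iff {x ε : ℝ} (hε : ε < 1) :
    1 - exp (-x) ≤ ε ↔ x ≤ -log (1 - ε) := by
  rw [sub_le_comm, le_neg, log_le_iff_le_exp (by linarith)]

theorem mul_div_rpow_mul_div_mul_div_rpow_inv_rpow {a b c x q : ℝ} (ha : 0 < a) (hb : 0 < b)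
    (hc : 0 < c) (hx : 0 ≤ x) (hq : q ≠ 0) : c * (a / b) ^ q * (b / a * (x / c) ^ q⁻¹) ^ q = x := by
  rw [mul_rpow (by positivity) (by positivity), rpow_inv_rpow (by positivity) hq, mul_assoc,
    ← mul_assoc ((a / b) ^ q), ← mul_rpow (by positivity) (by positivity), div_mul_div_comm,
    mul_comm a, div_self (by positivity), one_rpow, one_mul, mul_div_cancel₀ _ hc.ne']

theorem le_of_mul_rpow_le_mul_rpow {k p x y : ℝ} (hk : 0 < k) (hp : 0 < p) (hx : 0 ≤ x)
    (hy : 0 ≤ y) (h : k * x ^ p ≤ k * y ^ p) : x ≤ y :=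
  (rpow_le_rpow_iff hx hy hp).1 (le_of_mul_le_mul_left h hk)

theorem strictMonoOn_one_add_mul_log_one_add_div :
    StrictMonoOn (fun t : ℝ => (1 + t) * log (1 + t) / t) (Ioi 0) := by
  intro s hs t ht hst
  have := strictConvexOn_mul_log.secant_strict_mono (a := 1) (x := 1 + s) (y := 1 + t)
    (by simp) (by simp; linarith [hs.out]) (by simp; linarith [ht.out]) (by simp; exact hs.out.ne')
    (by simp; exact ht.out.ne') (by linarith)
  simpa using this

theorem hasDerivAt_log_one_add_mul_exp_neg_rpow {p k t : ℝ} (ht : 0 < t) :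
    HasDerivAt (fun t => log (1 + t) * exp (-(k * t ^ p)))
      (exp (-(k * t ^ p)) * (1 - p * k * t ^ p * ((1 + t) * log (1 + t) / t)) / (1 + t)) t := by
  have hlog : HasDerivAt (fun t => log (1 + t)) (1 / (1 + t)) t := by
    simpa using ((hasDerivAt_id t).const_add 1).log (by simp; linarith)
  have hexp : HasDerivAt (fun t => exp (-(k * t ^ p)))
      (exp (-(k * t ^ p)) * -(k * (p * t ^ (p - 1)))) t :=
    (((hasDerivAt_rpow_const (Or.inl ht.ne')).const_mul k).neg).exp
  refine (hlog.mul hexp).congr_deriv ?_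
  rw [rpow_sub_one ht.ne']
  field_simp
  ring

theorem strictMonoOn_log_one_add_mul_exp_neg_rpow {p k b : ℝ} (hp : 0 < p) (hb : 0 < b)
    (hcrit : p * k * b ^ p * (1 + b) * log (1 + b) = b) :
    StrictMonoOn (fun t => log (1 + t) * exp (-(k * t ^ p))) (Ioc 0 b) := by
  have hlogb : 0 < log (1 + b) := log_pos (by linarith)
  have hk : 0 < k := by
    have hQ : 0 < p * b ^ p * (1 + b) * log (1 + b) := by positivity
    refine (pos_iff_pos_of_mul_pos (b := p * b ^ p * (1 + b) * log (1 + b)) ?_).2 hQ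
    linarith
  refine strictMonoOn_of_deriv_pos (convex_Ioc 0 b)
    (fun t ht => (hasDerivAt_log_one_add_mul_exp_neg_rpow ht.1).continuousAt.continuousWithinAt)
    fun t ht => ?_
  rw [interior_Ioc] at ht
  obtain ⟨ht₀, htb⟩ := ht
  rw [(hasDerivAt_log_one_add_mul_exp_neg_rpow ht₀).deriv]
  have hslope := strictMonoOn_one_add_mul_log_one_add_div ht₀ (mem_Ioi.2 hb) htb
  have hpow : t ^ p < b ^ p := rpow_lt_rpow ht₀.le htb hp
  have key : p * k * t ^ p * ((1 + t) * log (1 + t) / t) < 1 := calc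
    _ < p * k * b ^ p * ((1 + b) * log (1 + b) / b) := by
      have : 0 < (1 + t) * log (1 + t) / t := by
        have := log_pos (by linarith : 1 < 1 + t)
        positivity
      gcongr
    _ = 1 := by field_simp; linear_combination hcrit
  have : 0 < 1 - p * k * t ^ p * ((1 + t) * log (1 + t) / t) := by linarith
  have := exp_pos (-(k * t ^ p))
  have : 0 < 1 + t := by linarith
  positivity

theorem logb_one_add_mul_exp_neg_rpow_le {p k b s t : ℝ} (hp : 0 < p) (hb : 0 < b)
    (hcrit : p * k * b ^ p * (1 + b) * log (1 + b) = b) (ht : 0 < t) (hts : t ≤ s) (hsb : s ≤ b) :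
    logb 2 (1 + t) * exp (-(k * t ^ p)) ≤ logb 2 (1 + s) * exp (-(k * s ^ p)) := by
  simp only [logb, div_mul_eq_mul_div]
  refine div_le_div_of_nonneg_right ?_ (log_pos one_lt_two).le
  exact (strictMonoOn_log_one_add_mul_exp_neg_rpow hp hb hcrit).monotoneOn
    ⟨ht, hts.trans hsb⟩ ⟨ht.trans_le hts, hsb⟩ hts

/-- Let W_max > 0 and ε ∈ (0, 1). Set k_max = 2·λ·κ·π·d²·(W_p/W_max)^{2/α},
let β_un > 0 be the unique solution of α·β = k_max·β^{2/α}·(1+β)·ln(1+β), and assume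
1 − exp(−α·β_un / (2·(1+β_un)·ln(1+β_un))) > ε. Set
β* = (W_max/W_p)·(−ln(1−ε)/(λ·κ·π·d²))^{α/2}. Then for every pair (W_s, β) with
0 < W_s ≤ W_max, β > 0 and outage constraint 1 − P_suc(W_s, β) ≤ ε, one has
T(W_s, β) ≤ T(W_max, β*) = (1−ε)·log₂(1 + β*). -/
theorem optimal_throughput_under_constraints
    (α lam κ d Wp Wmax kmax βun ε βstar : ℝ)
    (hα : 2 < α) (hlam : 0 < lam) (hd : 0 < d) (hWp : 0 < Wp) (hWmax : 0 < Wmax)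
    (hε : ε ∈ Set.Ioo (0 : ℝ) 1)
    (hκ : κ = Real.Gamma (1 + 2 / α) * Real.Gamma (1 - 2 / α))
    (hkmax : kmax = 2 * (lam * κ * Real.pi * d ^ 2 * (Wp / Wmax) ^ (2 / α)))
    (hβun : 0 < βun)
    (heq : α * βun = kmax * βun ^ (2 / α) * (1 + βun) * Real.log (1 + βun))
    (hout : 1 - Real.exp (-(α * βun / (2 * (1 + βun) * Real.log (1 + βun)))) > ε)
    (hβstar : βstar = (Wmax / Wp) * (-Real.log (1 - ε) / (lam * κ * Real.pi * d ^ 2)) ^ (α / 2)) :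
    (∀ Ws β : ℝ, 0 < Ws → Ws ≤ Wmax → 0 < β →
      1 - Real.exp (-(lam * κ * Real.pi * d ^ 2 * β ^ (2 / α) * (Wp / Ws) ^ (2 / α))) ≤ ε →
      Real.logb 2 (1 + β) *
          Real.exp (-(lam * κ * Real.pi * d ^ 2 * β ^ (2 / α) * (Wp / Ws) ^ (2 / α))) ≤
        Real.logb 2 (1 + βstar) *
          Real.exp (-(lam * κ * Real.pi * d ^ 2 * βstar ^ (2 / α) * (Wp / Wmax) ^ (2 / α)))) ∧
    Real.logb 2 (1 + βstar) *
        Real.exp (-(lam * κ * Real.pi * d ^ 2 * βstar ^ (2 / α) * (Wp / Wmax) ^ (2 / α))) =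
      (1 - ε) * Real.logb 2 (1 + βstar) := by
  obtain ⟨hε₀, hε₁⟩ := hε
  set p := 2 / α
  have hp : 0 < p := by positivity
  have hκ₀ : 0 < κ := hκ ▸ Gamma_one_add_mul_Gamma_one_sub_pos (by linarith [hp])
    ((div_lt_one (by linarith)).2 hα)
  set c := lam * κ * π * d ^ 2
  set k := c * (Wp / Wmax) ^ p with hk_def
  have hk : 0 < k := by positivity
  have hlogε : 0 < -log (1 - ε) := neg_pos.2 (log_neg (by linarith) (by linarith))
  have hβstar₀ : 0 < βstar := by rw [hβstar]; positivity
  have hkstar : k * βstar ^ p = -log (1 - ε) := by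
    rw [hβstar, hk_def, ← inv_div 2 α]
    exact mul_div_rpow_mul_div_mul_div_rpow_inv_rpow hWp hWmax (by positivity) hlogε.le hp.ne'
  subst hkmax
  have hcrit : p * k * βun ^ p * (1 + βun) * log (1 + βun) = βun := by
    linear_combination (-p / 2) * heq + βun / 2 * (div_mul_cancel₀ 2 (by linarith) : p * α = 2)
  have hstar_le : βstar ≤ βun := by
    have hkun : k * βun ^ p = α * βun / (2 * (1 + βun) * log (1 + βun)) := by
      have : 0 < log (1 + βun) := log_pos (by linarith)
      rw [eq_div_iff (by positivity)]
      linear_combination -heq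
    rw [← hkun, gt_iff_lt, ← not_le, one_sub_exp_neg_le_iff hε₁, not_le, ← hkstar] at hout
    exact le_of_mul_rpow_le_mul_rpow hk hp hβstar₀.le hβun.le hout.le
  have hk_star : c * βstar ^ p * (Wp / Wmax) ^ p = k * βstar ^ p := by rw [hk_def]; ring
  refine ⟨fun Ws β hWs hWsle hβ hcon => ?_, ?_⟩
  · rw [one_sub_exp_neg_le_iff hε₁] at hcon
    have hkβ : k * β ^ p ≤ c * β ^ p * (Wp / Ws) ^ p := by
      rw [hk_def, mul_right_comm]
      gcongr
    calc logb 2 (1 + β) * exp (-(c * β ^ p * (Wp / Ws) ^ p))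
        ≤ logb 2 (1 + β) * exp (-(k * β ^ p)) := by
          gcongr
          exact logb_nonneg one_lt_two (by linarith)
      _ ≤ logb 2 (1 + βstar) * exp (-(k * βstar ^ p)) :=
          logb_one_add_mul_exp_neg_rpow_le hp hβun hcrit hβ
            (le_of_mul_rpow_le_mul_rpow hk hp hβ.le hβstar₀.le (by linarith)) hstar_le
      _ = _ := by rw [hk_star]
  · rw [hk_star, hkstar, neg_neg, exp_log (by linarith), mul_comm]
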